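/- Let x > 0 be a real number. Then the partial sums of the alternating series Σ_{n=0}^∞ (−1)^n / (x + n + 1) converge, and their limit equals (1/2)·(ψ(x/2 + 1) − ψ((x+1)/2)), where ψ denotes the digamma function ψ(t) = Γ'(t)/Γ(t) of the real Gamma function Γ. That is, lim_{N→∞} Σ_{n=0}^{N−1} (−1)^n/(x + n + 1) = (1/2)·(ψ(x/2 + 1) − ψ((x+1)/2)). -/

import Mathlib

open Filter Set

/-- The digamma function ψ(t) = Γ'(t)/Γ(t) of the real Gamma function. -/
noncomputable def digamma (t : ℝ) : ℝ := deriv Real.Gamma t / Real.Gamma t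

/-!
Pairing consecutive terms, `1/(2a + 2k) - 1/(2a + 2k + 1) = ((a + k)⁻¹ - (a + 1/2 + k)⁻¹) / 2`,
and the recurrence `ψ(t + 1) = ψ(t) + 1/t` telescope the even partial sums to
`(ψ(a + 1/2) - ψ(a)) / 2 - (ψ(a + N + 1/2) - ψ(a + N)) / 2`. Since `ψ = (log Γ)'` is monotone
(log-convexity of Γ), the error term lies between `0` and `1/(a + N)`, so it vanishes; the
alternating series test then identifies the limit of all partial sums with that of the even ones.
-/

open Finset Real Topology

section Digamma

variable {t : ℝ}

lemma differentiableAt_Gamma_of_pos (ht : 0 < t) : DifferentiableAt ℝ Gamma t :=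
  differentiableAt_Gamma fun m => ((neg_nonpos.2 m.cast_nonneg).trans_lt ht).ne'

lemma differentiableAt_log_Gamma (ht : 0 < t) : DifferentiableAt ℝ (log ∘ Gamma) t :=
  (differentiableAt_Gamma_of_pos ht).log (Gamma_pos_of_pos ht).ne'

lemma digamma_eq_deriv_log_Gamma (ht : 0 < t) : digamma t = deriv (log ∘ Gamma) t := by
  rw [digamma, Function.comp_def,
    deriv.log (differentiableAt_Gamma_of_pos ht) (Gamma_pos_of_pos ht).ne']

lemma digamma_add_one (ht : 0 < t) : digamma (t + 1) = digamma t + t⁻¹ := by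
  have h_rec : ∀ y : ℝ, 0 < y → (log ∘ Gamma) (y + 1) = (log ∘ Gamma) y + log y :=
    fun y hy => by simp only [Function.comp_apply, Gamma_add_one hy.ne',
      log_mul hy.ne' (Gamma_pos_of_pos hy).ne', add_comm]
  rw [digamma_eq_deriv_log_Gamma (by positivity), digamma_eq_deriv_log_Gamma ht,
    ← deriv_comp_add_const, ← deriv_log,
    ← deriv_add (differentiableAt_log_Gamma ht) (differentiableAt_log ht.ne')]
  exact EventuallyEq.deriv_eq (by filter_upwards [eventually_gt_nhds ht] using h_rec)

lemma digamma_add_nat (ht : 0 < t) (N : ℕ) :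
    digamma (t + N) = digamma t + ∑ k ∈ range N, (t + k)⁻¹ := by
  induction N with
  | zero => simp
  | succ N ih =>
    rw [Nat.cast_succ, ← add_assoc, digamma_add_one (by positivity), ih, sum_range_succ,
      add_assoc]

lemma monotoneOn_digamma : MonotoneOn digamma (Ioi 0) :=
  (convexOn_log_Gamma.monotoneOn_deriv fun _ ht => differentiableAt_log_Gamma ht).congr
    fun _ ht => (digamma_eq_deriv_log_Gamma ht).symm

lemma tendsto_digamma_add_sub_digamma {c : ℝ} (hc₀ : 0 ≤ c) (hc₁ : c ≤ 1) :
    Tendsto (fun t => digamma (t + c) - digamma t) atTop (𝓝 0) := by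
  refine tendsto_of_tendsto_of_tendsto_of_le_of_le' tendsto_const_nhds tendsto_inv_atTop_zero
    ?_ ?_ <;> filter_upwards [eventually_gt_atTop 0] with t ht
  · exact sub_nonneg.2 (monotoneOn_digamma ht (by simp; linarith) (by linarith))
  · have := monotoneOn_digamma (by simp; linarith) (by simp; linarith)
      (by linarith : t + c ≤ t + 1)
    linarith [digamma_add_one ht]

end Digamma

lemma sum_range_two_mul_neg_one_pow_mul {R : Type*} [CommRing R] (f : ℕ → R) (N : ℕ) :
    ∑ i ∈ range (2 * N), (-1) ^ i * f i = ∑ k ∈ range N, (f (2 * k) - f (2 * k + 1)) := by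
  induction N with
  | zero => simp
  | succ N ih =>
    rw [Nat.mul_succ, sum_range_succ, sum_range_succ, ih, sum_range_succ, pow_succ, pow_mul]
    simp only [neg_one_sq, one_pow]
    ring

lemma sum_range_two_mul_neg_one_pow_mul_inv {a : ℝ} (ha : 0 < a) (N : ℕ) :
    ∑ i ∈ range (2 * N), (-1) ^ i * (2 * a + i)⁻¹ =
      (digamma (a + 1 / 2) - digamma a) / 2 -
        (digamma (a + N + 1 / 2) - digamma (a + N)) / 2 := by
  rw [sum_range_two_mul_neg_one_pow_mul, add_right_comm, digamma_add_nat (by positivity),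
    digamma_add_nat ha,
    show ∀ u v w z : ℝ, (u - w) / 2 - (u + v - (w + z)) / 2 = (z - v) / 2 by intros; ring,
    ← sum_sub_distrib, sum_div]
  refine sum_congr rfl fun k _ => ?_
  push_cast
  field_simp
  ring

theorem tendsto_sum_range_neg_one_pow_mul_inv {a : ℝ} (ha : 0 < a) :
    Tendsto (fun N => ∑ n ∈ range N, (-1) ^ n * (2 * a + n)⁻¹) atTop
      (𝓝 ((digamma (a + 1 / 2) - digamma a) / 2)) := by
  have h_anti : Antitone fun n : ℕ => (2 * a + n)⁻¹ := fun m n hmn =>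
    inv_anti₀ (by positivity) (by gcongr)
  have h_zero : Tendsto (fun n : ℕ => (2 * a + n)⁻¹) atTop (𝓝 0) :=
    tendsto_inv_atTop_zero.comp (tendsto_atTop_add_const_left _ _ tendsto_natCast_atTop_atTop)
  obtain ⟨l, hl⟩ := h_anti.tendsto_alternating_series_of_tendsto_zero h_zero
  have h_even : Tendsto (fun N => ∑ i ∈ range (2 * N), (-1) ^ i * (2 * a + i)⁻¹) atTop
      (𝓝 ((digamma (a + 1 / 2) - digamma a) / 2)) := by
    simp_rw [sum_range_two_mul_neg_one_pow_mul_inv ha]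
    have := ((tendsto_digamma_add_sub_digamma (c := 1 / 2) (by norm_num) (by norm_num)).comp
      (tendsto_atTop_add_const_left _ a tendsto_natCast_atTop_atTop)).div_const 2
    simpa using tendsto_const_nhds.sub this
  rwa [tendsto_nhds_unique h_even (hl.comp (tendsto_id.const_mul_atTop' two_pos))]

theorem zeta_stmt_6 (x : ℝ) (hx : 0 < x) :
    Tendsto (fun N : ℕ => ∑ n ∈ Finset.range N, (-1 : ℝ) ^ n / (x + n + 1)) atTop
      (nhds ((1 / 2) * (digamma (x / 2 + 1) - digamma ((x + 1) / 2)))) := by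
  have h := tendsto_sum_range_neg_one_pow_mul_inv (a := (x + 1) / 2) (by positivity)
  rw [show (x + 1) / 2 + 1 / 2 = x / 2 + 1 by ring] at h
  convert h using 2 with N
  · refine sum_congr rfl fun n _ => ?_
    rw [div_eq_mul_inv]
    ring_nf
  · ring
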